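/- (Lemma 2.2) Let the sequences {x_k^t}, {x_0^t}, {y_k^t} be generated by the flexible ADMM (Algorithm 2) for the consensus problem, with an arbitrary choice of index sets C^{t+1}, and suppose Assumption A2 holds. Then for every t ≥ 1: L({x_k^{t+1}}, x_0^{t+1}; y^{t+1}) − L({x_k^t}, x_0^t; y^t) ≤ Σ_{k ∈ C^{t+1}, k ≠ 0} (L_k²/ρ_k − γ_k(ρ_k)/2) ‖x_k^{t+1} − x_k^t‖² − (γ/2) ‖x_0^{t+1} − x_0^t‖², where γ := Σ_{k=1}^K ρ_k. -/

import Mathlib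

/-!
The `x₀`-update minimises the augmented Lagrangian over `X`, and `L` is `(∑ ρ_k)`-strongly
convex in `x₀`, so that step lowers `L` by at least `(∑ ρ_k)/2 ‖Δx₀‖²`. Likewise each updated
`x_k` minimises a `γ_k`-strongly convex subproblem, which lowers `L` by at least
`γ_k/2 ‖Δx_k‖²`, while the following dual step raises it by `⟪Δy_k, x_k − x₀⟫ = ‖Δy_k‖² / ρ_k`.
The optimality condition of the `x_k`-subproblem combined with the dual step reads
`y_k = −∇g_k(x_k)`; as every block is updated at the first iteration, this holds for all `k`
from `t = 1` on, whence `‖Δy_k‖ ≤ L_k ‖Δx_k‖`.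
-/

open Filter
open scoped RealInnerProductSpace BigOperators

/-- Augmented Lagrangian for the reformulated consensus problem:
`L({x_k}, x_0; y) = Σ_k g_k(x_k) + h(x_0) + Σ_k ⟨y_k, x_k − x_0⟩ + Σ_k (ρ_k/2)‖x_k − x_0‖²`. -/
noncomputable def augL {N K : ℕ} (g : Fin K → EuclideanSpace ℝ (Fin N) → ℝ)
    (h : EuclideanSpace ℝ (Fin N) → ℝ) (ρ : Fin K → ℝ)
    (xk : Fin K → EuclideanSpace ℝ (Fin N)) (x0 : EuclideanSpace ℝ (Fin N))
    (y : Fin K → EuclideanSpace ℝ (Fin N)) : ℝ :=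
  (∑ k, g k (xk k)) + h x0 + (∑ k, ⟪y k, xk k - x0⟫)
    + ∑ k, ρ k / 2 * ‖xk k - x0‖ ^ 2

open Topology

section StrongConvexity

variable {E : Type*} [NormedAddCommGroup E] [InnerProductSpace ℝ E] {s : Set E} {m : ℝ}
  {f : E → ℝ}

lemma StrongConvexOn.add_sq_le_of_isMinOn (hf : StrongConvexOn s m f) {a z : E}
    (hmin : IsMinOn f s a) (ha : a ∈ s) (hz : z ∈ s) :
    f a + m / 2 * ‖z - a‖ ^ 2 ≤ f z := by
  set c := m / 2 * ‖z - a‖ ^ 2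
  -- Compare `f a` with `f` on the segment `[a, z]` and let the point tend to `a`.
  have hseg : ∀ θ ∈ Set.Ioo (0 : ℝ) 1, f a + (1 - θ) * c ≤ f z := by
    rintro θ ⟨hθ0, hθ1⟩
    have hconv := hf.2 hz ha hθ0.le (sub_nonneg.2 hθ1.le) (add_sub_cancel θ 1)
    have hmin' : f a ≤ f _ :=
      hmin (hf.1 hz ha hθ0.le (sub_nonneg.2 hθ1.le) (add_sub_cancel θ 1))
    simp only [smul_eq_mul] at hconv
    refine le_of_mul_le_mul_left ?_ hθ0
    linear_combination hmin' + hconv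
  have hlim : Tendsto (fun θ : ℝ => f a + (1 - θ) * c) (𝓝[>] 0) (𝓝 (f a + c)) := by
    have : Continuous fun θ : ℝ => f a + (1 - θ) * c := by fun_prop
    simpa using (this.tendsto 0).mono_left nhdsWithin_le_nhds
  exact le_of_tendsto hlim (eventually_of_mem (Ioo_mem_nhdsGT one_pos) hseg)

lemma ConvexOn.strongConvexOn_add_sq (hf : ConvexOn ℝ s f) :
    StrongConvexOn s m fun z => f z + m / 2 * ‖z‖ ^ 2 := by
  simpa [strongConvexOn_iff_convex] using hf

lemma StrongConvexOn.add_inner_add_const (hf : StrongConvexOn s m f) (v : E) (c : ℝ) :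
    StrongConvexOn s m fun z => f z + (⟪v, z⟫ + c) := by
  rw [strongConvexOn_iff_convex] at hf ⊢
  have haff : ConvexOn ℝ s fun z => ⟪v, z⟫ + c :=
    ((innerₛₗ ℝ v).convexOn hf.1).add_const c
  have hsplit : (fun z => f z + (⟪v, z⟫ + c) - m / 2 * ‖z‖ ^ 2)
      = (fun z => f z - m / 2 * ‖z‖ ^ 2) + fun z => ⟪v, z⟫ + c := by
    funext z
    simp only [Pi.add_apply]
    ring
  rw [hsplit]
  exact hf.add haff

lemma IsLocalMin.hasGradientAt_eq_zero [CompleteSpace E] {a G : E} (hmin : IsLocalMin f a)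
    (hf : HasGradientAt f G a) : G = 0 := by
  simpa using congrArg (InnerProductSpace.toDual ℝ E).symm
    (hmin.hasFDerivAt_eq_zero hf.hasFDerivAt)

end StrongConvexity

section Block

variable {E : Type*} [NormedAddCommGroup E] [InnerProductSpace ℝ E] {g : E → ℝ} {r : ℝ}

noncomputable def augLBlock (g : E → ℝ) (r : ℝ) (y x0 z : E) : ℝ :=
  g z + ⟪y, z - x0⟫ + r / 2 * ‖z - x0‖ ^ 2

lemma augLBlock_eq_sq_add_inner (y x0 z : E) :
    augLBlock g r y x0 z
      = g z + r / 2 * ‖z‖ ^ 2 + (⟪y - r • x0, z⟫ + (r / 2 * ‖x0‖ ^ 2 - ⟪y, x0⟫)) := by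
  simp only [augLBlock, inner_sub_left, inner_sub_right, real_inner_smul_left, norm_sub_sq_real,
    real_inner_comm z x0]
  ring

lemma augLBlock_eq_sq_consensus_add_inner (y x0 z : E) :
    augLBlock g r y x0 z
      = r / 2 * ‖x0‖ ^ 2 + (⟪-(y + r • z), x0⟫ + (g z + ⟪y, z⟫ + r / 2 * ‖z‖ ^ 2)) := by
  simp only [augLBlock, inner_neg_left, inner_add_left, inner_sub_right, real_inner_smul_left,
    norm_sub_sq_real]
  ring

lemma strongConvexOn_augLBlock {s : Set E} {m : ℝ}
    (hg : StrongConvexOn s m fun z => g z + r / 2 * ‖z‖ ^ 2) (y x0 : E) :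
    StrongConvexOn s m (augLBlock g r y x0) := by
  rw [show augLBlock g r y x0 = _ from funext (augLBlock_eq_sq_add_inner y x0)]
  exact hg.add_inner_add_const _ _

lemma augLBlock_update_sub_le {γ L : ℝ} {y y' x0 x x' : E}
    (hg : StrongConvexOn Set.univ γ fun z => g z + r / 2 * ‖z‖ ^ 2) (hr : 0 < r)
    (hmin : IsMinOn (augLBlock g r y x0) Set.univ x') (hy' : y' = y + r • (x' - x0))
    (hLip : ‖y' - y‖ ≤ L * ‖x' - x‖) :
    augLBlock g r y' x0 x' - augLBlock g r y x0 x ≤ (L ^ 2 / r - γ / 2) * ‖x' - x‖ ^ 2 := by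
  have hgap :=
    (strongConvexOn_augLBlock hg y x0).add_sq_le_of_isMinOn hmin trivial (Set.mem_univ x)
  have hdy : y' - y = r • (x' - x0) := by rw [hy', add_sub_cancel_left]
  have hinner : ⟪y' - y, x' - x0⟫ = ‖y' - y‖ ^ 2 / r := by
    rw [eq_div_iff hr.ne', hdy, real_inner_smul_left, real_inner_self_eq_norm_sq, norm_smul,
      Real.norm_of_nonneg hr.le]
    ring
  have hsq : ‖y' - y‖ ^ 2 ≤ L ^ 2 * ‖x' - x‖ ^ 2 := by
    rw [← mul_pow]
    exact pow_le_pow_left₀ (norm_nonneg _) hLip 2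
  have hsplit : augLBlock g r y' x0 x' - augLBlock g r y x0 x
      = augLBlock g r y x0 x' - augLBlock g r y x0 x + ⟪y' - y, x' - x0⟫ := by
    simp only [augLBlock, inner_sub_left]
    ring
  calc augLBlock g r y' x0 x' - augLBlock g r y x0 x
      = augLBlock g r y x0 x' - augLBlock g r y x0 x + ‖y' - y‖ ^ 2 / r := by
        rw [hsplit, hinner]
    _ ≤ -(γ / 2 * ‖x' - x‖ ^ 2) + L ^ 2 * ‖x' - x‖ ^ 2 / r := by
      rw [norm_sub_rev] at hgap
      gcongr
      linarith
    _ = (L ^ 2 / r - γ / 2) * ‖x' - x‖ ^ 2 := by ring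

variable [CompleteSpace E]

lemma hasGradientAt_augLBlock {G z : E} (hg : HasGradientAt g G z) (y x0 : E) :
    HasGradientAt (augLBlock g r y x0) (G + y + r • (z - x0)) z := by
  rw [hasGradientAt_iff_hasFDerivAt]
  have hlin : HasFDerivAt (fun w : E => ⟪y, w - x0⟫) (innerSL ℝ y) z := by
    simpa only [innerSL_apply_apply, inner_sub_right] using
      ((innerSL ℝ y).hasFDerivAt (x := z)).sub_const ⟪y, x0⟫
  have hsq : HasFDerivAt (fun w : E => r / 2 * ‖w - x0‖ ^ 2)
      ((r / 2) • (2 • (innerSL ℝ (z - x0)).comp (ContinuousLinearMap.id ℝ E))) z :=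
    (((hasFDerivAt_id z).sub_const x0).norm_sq).const_mul (r / 2)
  refine ((hg.hasFDerivAt.add hlin).add hsq).congr_fderiv ?_
  ext w
  simp [InnerProductSpace.toDual_apply_apply]
  ring

lemma IsMinOn.augLBlock_dual_update_eq_neg_grad {G y x0 z : E}
    (hmin : IsMinOn (augLBlock g r y x0) Set.univ z) (hg : HasGradientAt g G z) :
    y + r • (z - x0) = -G := by
  have hzero := (hmin.isLocalMin Filter.univ_mem).hasGradientAt_eq_zero
    (hasGradientAt_augLBlock hg y x0)
  rw [add_assoc] at hzero
  exact eq_neg_of_add_eq_zero_right hzero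

end Block

lemma augL_eq_add_sum_augLBlock {N K : ℕ} (g : Fin K → EuclideanSpace ℝ (Fin N) → ℝ)
    (h : EuclideanSpace ℝ (Fin N) → ℝ) (ρ : Fin K → ℝ)
    (xk : Fin K → EuclideanSpace ℝ (Fin N)) (x0 : EuclideanSpace ℝ (Fin N))
    (y : Fin K → EuclideanSpace ℝ (Fin N)) :
    augL g h ρ xk x0 y = h x0 + ∑ k, augLBlock (g k) (ρ k) (y k) x0 (xk k) := by
  simp only [augL, augLBlock, Finset.sum_add_distrib]
  ring

lemma strongConvexOn_augL {N K : ℕ} (g : Fin K → EuclideanSpace ℝ (Fin N) → ℝ)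
    {h : EuclideanSpace ℝ (Fin N) → ℝ} (ρ : Fin K → ℝ)
    (xk : Fin K → EuclideanSpace ℝ (Fin N)) (y : Fin K → EuclideanSpace ℝ (Fin N))
    {s : Set (EuclideanSpace ℝ (Fin N))} (hh : ConvexOn ℝ s h) :
    StrongConvexOn s (∑ k, ρ k) fun z => augL g h ρ xk z y := by
  have hsplit : (fun z => augL g h ρ xk z y) = fun z =>
      h z + (∑ k, ρ k) / 2 * ‖z‖ ^ 2 + (⟪∑ k, -(y k + ρ k • xk k), z⟫
        + ∑ k, (g k (xk k) + ⟪y k, xk k⟫ + ρ k / 2 * ‖xk k‖ ^ 2)) := by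
    funext z
    simp only [augL_eq_add_sum_augLBlock, augLBlock_eq_sq_consensus_add_inner,
      Finset.sum_add_distrib, sum_inner, ← Finset.sum_div, ← Finset.sum_mul]
    ring
  rw [hsplit]
  exact hh.strongConvexOn_add_sq.add_inner_add_const _ _

lemma augL_sub_augL_le_of_isMinOn {N K : ℕ} (g : Fin K → EuclideanSpace ℝ (Fin N) → ℝ)
    {h : EuclideanSpace ℝ (Fin N) → ℝ} (ρ : Fin K → ℝ)
    (xk : Fin K → EuclideanSpace ℝ (Fin N)) (y : Fin K → EuclideanSpace ℝ (Fin N))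
    {s : Set (EuclideanSpace ℝ (Fin N))} (hh : ConvexOn ℝ s h) {x0 x0' : EuclideanSpace ℝ (Fin N)}
    (hmin : IsMinOn (fun z => augL g h ρ xk z y) s x0') (hx0' : x0' ∈ s) (hx0 : x0 ∈ s) :
    augL g h ρ xk x0' y - augL g h ρ xk x0 y ≤ -((∑ k, ρ k) / 2 * ‖x0' - x0‖ ^ 2) := by
  have hgap := (strongConvexOn_augL g ρ xk y hh).add_sq_le_of_isMinOn hmin hx0' hx0
  rw [norm_sub_rev] at hgap
  linarith

lemma augL_sub_augL_eq_sum_filter {N K : ℕ} (g : Fin K → EuclideanSpace ℝ (Fin N) → ℝ)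
    (h : EuclideanSpace ℝ (Fin N) → ℝ) (ρ : Fin K → ℝ)
    {x x' y y' : Fin K → EuclideanSpace ℝ (Fin N)} (x0 : EuclideanSpace ℝ (Fin N))
    (p : Fin K → Prop) [DecidablePred p] (hx : ∀ k, ¬p k → x' k = x k)
    (hy : ∀ k, ¬p k → y' k = y k) :
    augL g h ρ x' x0 y' - augL g h ρ x x0 y
      = ∑ k ∈ Finset.univ.filter p,
          (augLBlock (g k) (ρ k) (y' k) x0 (x' k) - augLBlock (g k) (ρ k) (y k) x0 (x k)) := by
  rw [augL_eq_add_sum_augLBlock, augL_eq_add_sum_augLBlock, add_sub_add_left_eq_sub,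
    ← Finset.sum_sub_distrib, Finset.sum_filter_of_ne]
  intro k _ hne
  by_contra hk
  simp [hx k hk, hy k hk] at hne

lemma holds_after_first_update {ι : Type*} {C : ℕ → Finset ι} {i : ι} (hC1 : i ∈ C 1)
    {P : ℕ → Prop} (hupd : ∀ t, i ∈ C (t + 1) → P (t + 1))
    (hkeep : ∀ t, i ∉ C (t + 1) → P t → P (t + 1)) :
    ∀ t, 1 ≤ t → P t := by
  intro t ht
  induction t, ht using Nat.le_induction with
  | base => exact hupd 0 hC1
  | succ t _ ih =>
    by_cases hi : i ∈ C (t + 1)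
    exacts [hupd t hi, hkeep t hi ih]

theorem lemma2_2_general
    {N K : ℕ}
    (g : Fin K → EuclideanSpace ℝ (Fin N) → ℝ)
    (g' : Fin K → EuclideanSpace ℝ (Fin N) → EuclideanSpace ℝ (Fin N))
    (h : EuclideanSpace ℝ (Fin N) → ℝ)
    (X : Set (EuclideanSpace ℝ (Fin N)))
    (Lg ρ γ : Fin K → ℝ)
    (x : ℕ → Fin K → EuclideanSpace ℝ (Fin N))
    (x0 : ℕ → EuclideanSpace ℝ (Fin N))
    (y : ℕ → Fin K → EuclideanSpace ℝ (Fin N))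
    (C : ℕ → Finset (Option (Fin K)))
    -- data assumptions (Assumption A1)
    (hgrad : ∀ k z, HasGradientAt (g k) (g' k z) z)
    (hLip : ∀ k u v, ‖g' k u - g' k v‖ ≤ Lg k * ‖u - v‖)
    (hconv : ConvexOn ℝ Set.univ h)
    (hXcv : Convex ℝ X)
    (hρ : ∀ k, 0 < ρ k)
    -- Assumption A2
    (hstrong : ∀ k, StrongConvexOn Set.univ (γ k)
      (fun z : EuclideanSpace ℝ (Fin N) => g k z + ρ k / 2 * ‖z‖ ^ 2))
    -- Algorithm 2
    (hC1 : C 1 = Finset.univ)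
    (hx0upd : ∀ t : ℕ,
      (none ∈ C (t + 1) → x0 (t + 1) ∈ X ∧ ∀ z ∈ X,
        augL g h ρ (x t) (x0 (t + 1)) (y t) ≤ augL g h ρ (x t) z (y t)) ∧
      (none ∉ C (t + 1) → x0 (t + 1) = x0 t))
    (hxupd : ∀ (t : ℕ) (k : Fin K),
      (some k ∈ C (t + 1) → ∀ z : EuclideanSpace ℝ (Fin N),
        g k (x (t + 1) k) + ⟪y t k, x (t + 1) k - x0 (t + 1)⟫
            + ρ k / 2 * ‖x (t + 1) k - x0 (t + 1)‖ ^ 2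
          ≤ g k z + ⟪y t k, z - x0 (t + 1)⟫ + ρ k / 2 * ‖z - x0 (t + 1)‖ ^ 2) ∧
      (some k ∉ C (t + 1) → x (t + 1) k = x t k))
    (hyupd : ∀ (t : ℕ) (k : Fin K),
      (some k ∈ C (t + 1) → y (t + 1) k = y t k + ρ k • (x (t + 1) k - x0 (t + 1))) ∧
      (some k ∉ C (t + 1) → y (t + 1) k = y t k)) :
    ∀ t : ℕ, 1 ≤ t →
      augL g h ρ (x (t + 1)) (x0 (t + 1)) (y (t + 1))
          - augL g h ρ (x t) (x0 t) (y t)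
        ≤ (∑ k ∈ Finset.univ.filter (fun k : Fin K => some k ∈ C (t + 1)),
            (Lg k ^ 2 / ρ k - γ k / 2) * ‖x (t + 1) k - x t k‖ ^ 2)
          - (∑ k, ρ k) / 2 * ‖x0 (t + 1) - x0 t‖ ^ 2 := by
  intro t ht
  have hmin : ∀ s k, some k ∈ C (s + 1) →
      IsMinOn (augLBlock (g k) (ρ k) (y s k) (x0 (s + 1))) Set.univ (x (s + 1) k) :=
    fun s k hk z _ => (hxupd s k).1 hk z
  have hdual : ∀ s, 1 ≤ s → ∀ k, y s k = -g' k (x s k) := fun s hs k =>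
    holds_after_first_update (P := fun s => y s k = -g' k (x s k))
      (hC1 ▸ Finset.mem_univ (some k))
      (fun s hk => ((hyupd s k).1 hk).trans
        ((hmin s k hk).augLBlock_dual_update_eq_neg_grad (hgrad k _)))
      (fun s hk hs => by rw [(hyupd s k).2 hk, (hxupd s k).2 hk, hs]) s hs
  have hx0X : x0 t ∈ X :=
    holds_after_first_update (P := fun s => x0 s ∈ X) (hC1 ▸ Finset.mem_univ none)
      (fun s h0 => ((hx0upd s).1 h0).1) (fun s h0 hs => (hx0upd s).2 h0 ▸ hs) t ht
  have hx0step : augL g h ρ (x t) (x0 (t + 1)) (y t) - augL g h ρ (x t) (x0 t) (y t)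
      ≤ -((∑ k, ρ k) / 2 * ‖x0 (t + 1) - x0 t‖ ^ 2) := by
    by_cases h0 : none ∈ C (t + 1)
    · obtain ⟨hmem, hminX⟩ := (hx0upd t).1 h0
      exact augL_sub_augL_le_of_isMinOn g ρ (x t) (y t)
        (hconv.subset (Set.subset_univ X) hXcv) hminX hmem hx0X
    · simp [(hx0upd t).2 h0]
  have hblocks : augL g h ρ (x (t + 1)) (x0 (t + 1)) (y (t + 1))
        - augL g h ρ (x t) (x0 (t + 1)) (y t)
      ≤ ∑ k ∈ Finset.univ.filter (fun k : Fin K => some k ∈ C (t + 1)),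
          (Lg k ^ 2 / ρ k - γ k / 2) * ‖x (t + 1) k - x t k‖ ^ 2 := by
    rw [augL_sub_augL_eq_sum_filter g h ρ _ _ (fun k => (hxupd t k).2) (fun k => (hyupd t k).2)]
    refine Finset.sum_le_sum fun k hk => ?_
    have hkC := (Finset.mem_filter.1 hk).2
    refine augLBlock_update_sub_le (hstrong k) (hρ k) (hmin t k hkC) ((hyupd t k).1 hkC) ?_
    rw [hdual (t + 1) (by omega), hdual t ht, neg_sub_neg, norm_sub_rev]
    exact hLip k _ _
  linarith

/-- **Lemma 2.2.**  For the flexible ADMM (Algorithm 2) on the consensus problem, under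
Assumption A2, for every `t ≥ 1`:
`L({x^{t+1}}, x_0^{t+1}; y^{t+1}) − L({x^t}, x_0^t; y^t)
  ≤ Σ_{k∈C^{t+1}, k≠0} (L_k²/ρ_k − γ_k/2)‖x_k^{t+1} − x_k^t‖² − (γ/2)‖x_0^{t+1} − x_0^t‖²`,
where `γ = Σ_k ρ_k`. -/
theorem lemma2_2
    {N K : ℕ} (hK : 1 ≤ K)
    (g : Fin K → EuclideanSpace ℝ (Fin N) → ℝ)
    (g' : Fin K → EuclideanSpace ℝ (Fin N) → EuclideanSpace ℝ (Fin N))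
    (h : EuclideanSpace ℝ (Fin N) → ℝ)
    (X : Set (EuclideanSpace ℝ (Fin N)))
    (Lg ρ γ : Fin K → ℝ)
    (x : ℕ → Fin K → EuclideanSpace ℝ (Fin N))
    (x0 : ℕ → EuclideanSpace ℝ (Fin N))
    (y : ℕ → Fin K → EuclideanSpace ℝ (Fin N))
    (C : ℕ → Finset (Option (Fin K)))
    -- data assumptions (Assumption A1)
    (hgrad : ∀ k z, HasGradientAt (g k) (g' k z) z)
    (hLpos : ∀ k, 0 < Lg k)
    (hLip : ∀ k u v, ‖g' k u - g' k v‖ ≤ Lg k * ‖u - v‖)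
    (hconv : ConvexOn ℝ Set.univ h)
    (hXne : X.Nonempty) (hXcl : IsClosed X) (hXcv : Convex ℝ X)
    (hρ : ∀ k, 0 < ρ k)
    -- Assumption A2
    (hγpos : ∀ k, 0 < γ k)
    (hstrong : ∀ k, StrongConvexOn Set.univ (γ k)
      (fun z : EuclideanSpace ℝ (Fin N) => g k z + ρ k / 2 * ‖z‖ ^ 2))
    (hA2b : ∀ k, 2 * Lg k ^ 2 < ρ k * γ k)
    (hA2c : ∀ k, Lg k ≤ ρ k)
    -- Algorithm 2
    (hC1 : C 1 = Finset.univ)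
    (hx0upd : ∀ t : ℕ,
      (none ∈ C (t + 1) → x0 (t + 1) ∈ X ∧ ∀ z ∈ X,
        augL g h ρ (x t) (x0 (t + 1)) (y t) ≤ augL g h ρ (x t) z (y t)) ∧
      (none ∉ C (t + 1) → x0 (t + 1) = x0 t))
    (hxupd : ∀ (t : ℕ) (k : Fin K),
      (some k ∈ C (t + 1) → ∀ z : EuclideanSpace ℝ (Fin N),
        g k (x (t + 1) k) + ⟪y t k, x (t + 1) k - x0 (t + 1)⟫
            + ρ k / 2 * ‖x (t + 1) k - x0 (t + 1)‖ ^ 2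
          ≤ g k z + ⟪y t k, z - x0 (t + 1)⟫ + ρ k / 2 * ‖z - x0 (t + 1)‖ ^ 2) ∧
      (some k ∉ C (t + 1) → x (t + 1) k = x t k))
    (hyupd : ∀ (t : ℕ) (k : Fin K),
      (some k ∈ C (t + 1) → y (t + 1) k = y t k + ρ k • (x (t + 1) k - x0 (t + 1))) ∧
      (some k ∉ C (t + 1) → y (t + 1) k = y t k)) :
    ∀ t : ℕ, 1 ≤ t →
      augL g h ρ (x (t + 1)) (x0 (t + 1)) (y (t + 1))
          - augL g h ρ (x t) (x0 t) (y t)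
        ≤ (∑ k ∈ Finset.univ.filter (fun k : Fin K => some k ∈ C (t + 1)),
            (Lg k ^ 2 / ρ k - γ k / 2) * ‖x (t + 1) k - x t k‖ ^ 2)
          - (∑ k, ρ k) / 2 * ‖x0 (t + 1) - x0 t‖ ^ 2 :=
  lemma2_2_general g g' h X Lg ρ γ x x0 y C hgrad hLip hconv hXcv hρ hstrong hC1 hx0upd hxupd hyupd
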